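/- arXiv:2507.08101 — 2 statements merged into one kernel-verified Lean document; each statement's English description precedes it below -/
import Mathlib

section
/- Assume limsup_{t → ∞} B(t) / { K · exp[(μ − σ²/2)t + σ·√(2t·ln(ln t))] } > 1. Then τ < ∞ almost surely, i.e. ℙ(τ < ∞) = 1. -/
open MeasureTheory ProbabilityTheory Filter Set
open scoped ENNReal NNReal

noncomputable section

/-- A standard one-dimensional Brownian motion on a probability space `(Ω, P)`:
measurable coordinates, starts at `0`, almost surely continuous paths, Gaussian
increments `W t - W s ~ N(0, t - s)`, and independent increments. -/
structure IsStandardBrownianMotion {Ω : Type*} [MeasurableSpace Ω]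
    (P : Measure Ω) (W : ℝ → Ω → ℝ) : Prop where
  meas : ∀ t : ℝ, Measurable (W t)
  init : ∀ᵐ ω ∂P, W 0 ω = 0
  cont : ∀ᵐ ω ∂P, Continuous fun t => W t ω
  gauss_incr : ∀ s t : ℝ, 0 ≤ s → s ≤ t →
    P.map (fun ω => W t ω - W s ω) = gaussianReal 0 (Real.toNNReal (t - s))
  indep_incr : ∀ (n : ℕ) (t : Fin (n + 1) → ℝ), Monotone t → (∀ i, 0 ≤ t i) →
    iIndepFun
      (fun i : Fin n => fun ω => W (t i.succ) ω - W (t i.castSucc) ω) P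

/-- The geometric Brownian motion `V_t = V₀ exp((μ - σ²/2) t + σ W_t)`. -/
def gbm {Ω : Type*} (V₀ μ σ : ℝ) (W : ℝ → Ω → ℝ) (t : ℝ) (ω : Ω) : ℝ :=
  V₀ * Real.exp ((μ - σ ^ 2 / 2) * t + σ * W t ω)

/-- First passage time of the process `V` through the barrier `B`, with values in
`[0, ∞]` and the convention `inf ∅ = ∞`. -/
def fpt {Ω : Type*} (V : ℝ → Ω → ℝ) (B : ℝ → ℝ) (ω : Ω) : ℝ≥0∞ :=
  sInf {x : ℝ≥0∞ | ∃ t : ℝ, 0 ≤ t ∧ V t ω = B t ∧ x = ENNReal.ofReal t}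

open scoped Topology

/-! If the path of `V` never meets `B`, continuity and `V₀ > B(0)` keep it strictly above `B` at all
times. At the times `t` where `B(t) > K exp((μ - σ²/2)t + σ√(2t ln ln t))`, which are unbounded by
the limsup hypothesis, this forces `W_t > √(2t ln ln t) + a` for a constant `a`, an event of
probability `P(N(0,1) > √(2 ln ln t) + a/√t)`, which tends to `0`. So the event of never meeting
`B` is null; no law of the iterated logarithm is needed. -/

lemma tendsto_measure_Ioi_atTop (ν : Measure ℝ) [IsFiniteMeasure ν] :
    Tendsto (fun y => ν (Ioi y)) atTop (𝓝 0) := by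
  have h := tendsto_measure_iInter_atTop (μ := ν) (fun y => measurableSet_Ioi.nullMeasurableSet)
    (fun _ _ hab => Ioi_subset_Ioi hab) ⟨0, measure_ne_top ν _⟩
  have hempty : (⋂ y : ℝ, Ioi y) = ∅ := iInter_eq_empty_iff.2 fun y => ⟨y, lt_irrefl y⟩
  rwa [hempty, measure_empty] at h

lemma gaussianReal_Ioi_eq_standard_Ioi_div_sqrt {v : ℝ} (hv : 0 < v) (x : ℝ) :
    gaussianReal 0 v.toNNReal (Ioi x) = gaussianReal 0 1 (Ioi (x / √v)) := by
  have hsv : 0 < √v := Real.sqrt_pos.mpr hv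
  have hmap := gaussianReal_map_const_mul (μ := 0) (v := 1) √v
  have hvar : NNReal.mk (√v ^ 2) (sq_nonneg _) * 1 = v.toNNReal := by
    ext; simp [Real.sq_sqrt hv.le, hv.le]
  rw [mul_zero, hvar] at hmap
  rw [← hmap, Measure.map_apply (measurable_const_mul _) measurableSet_Ioi]
  congr 1
  ext y
  simp only [mem_preimage, mem_Ioi, div_lt_iff₀ hsv, mul_comm]

lemma tendsto_sqrt_two_mul_log_log_add_div_sqrt (a : ℝ) :
    Tendsto (fun t => (√(2 * t * Real.log (Real.log t)) + a) / √t) atTop atTop := by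
  have hloglog : Tendsto (fun t => √(2 * Real.log (Real.log t))) atTop atTop :=
    Real.tendsto_sqrt_atTop.comp
      ((Real.tendsto_log_atTop.comp Real.tendsto_log_atTop).const_mul_atTop two_pos)
  have hshift : Tendsto (fun t => a / √t) atTop (𝓝 0) :=
    tendsto_const_nhds.div_atTop Real.tendsto_sqrt_atTop
  refine (hloglog.atTop_add hshift).congr' ?_
  filter_upwards [eventually_gt_atTop 0] with t ht
  rw [add_div, mul_comm 2 t, mul_assoc, Real.sqrt_mul ht.le,
    mul_div_cancel_left₀ _ (Real.sqrt_pos.mpr ht).ne']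

lemma add_log_div_lt_of_mul_exp_lt {K V d σ s w : ℝ} (hK : 0 < K) (hσ : 0 < σ)
    (h : K * Real.exp (d + σ * s) < V * Real.exp (d + σ * w)) :
    s + (Real.log K - Real.log V) / σ < w := by
  have hV : 0 < V := pos_of_mul_pos_left ((by positivity : 0 < K * Real.exp _).trans h)
    (Real.exp_pos _).le
  have hlog := Real.log_lt_log (by positivity) h
  rw [Real.log_mul hK.ne' (Real.exp_pos _).ne', Real.log_mul hV.ne' (Real.exp_pos _).ne',
    Real.log_exp, Real.log_exp] at hlog
  rw [← mul_lt_mul_iff_right₀ hσ, mul_add, mul_div_cancel₀ _ hσ.ne']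
  linarith

lemma continuous_gbm {Ω : Type*} (V₀ μ σ : ℝ) {W : ℝ → Ω → ℝ} {ω : Ω}
    (hW : Continuous fun t => W t ω) : Continuous fun t => gbm V₀ μ σ W t ω := by
  unfold gbm
  fun_prop

lemma fpt_lt_top_of_le {Ω : Type*} {V : ℝ → Ω → ℝ} {B : ℝ → ℝ} {ω : Ω}
    (hV : ContinuousOn (V · ω) (Ici 0)) (hB : ContinuousOn B (Ici 0)) (h0 : B 0 ≤ V 0 ω)
    {t : ℝ} (ht : 0 ≤ t) (hle : V t ω ≤ B t) : fpt V B ω < ⊤ := by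
  obtain ⟨s, hs, hBV⟩ := isPreconnected_Ici.intermediate_value₂ self_mem_Ici ht hB hV h0 hle
  exact lt_of_le_of_lt (sInf_le ⟨s, hs, hBV.symm, rfl⟩) ENNReal.ofReal_lt_top

namespace IsStandardBrownianMotion

variable {Ω : Type*} [MeasurableSpace Ω] {P : Measure Ω} {W : ℝ → Ω → ℝ}

lemma map_eq_gaussianReal (hW : IsStandardBrownianMotion P W) {t : ℝ} (ht : 0 ≤ t) :
    P.map (W t) = gaussianReal 0 t.toNNReal := by
  have hincr := hW.gauss_incr 0 t le_rfl ht
  rw [sub_zero] at hincr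
  rw [← hincr]
  refine Measure.map_congr ?_
  filter_upwards [hW.init] with ω h0
  simp [h0]

lemma measure_setOf_lt_eq (hW : IsStandardBrownianMotion P W) {t : ℝ} (ht : 0 < t) (x : ℝ) :
    P {ω | x < W t ω} = gaussianReal 0 1 (Ioi (x / √t)) := by
  rw [← gaussianReal_Ioi_eq_standard_Ioi_div_sqrt ht, ← hW.map_eq_gaussianReal ht.le,
    Measure.map_apply (hW.meas t) measurableSet_Ioi]
  rfl

lemma measure_eq_zero_of_frequently_subset (hW : IsStandardBrownianMotion P W)
    {E : Set Ω} {x : ℝ → ℝ} (hx : Tendsto (fun t => x t / √t) atTop atTop)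
    (hE : ∃ᶠ t in atTop, E ⊆ {ω | x t < W t ω}) : P E = 0 := by
  have htail : Tendsto (fun t => P {ω | x t < W t ω}) atTop (𝓝 0) := by
    refine ((tendsto_measure_Ioi_atTop (gaussianReal 0 1)).comp hx).congr' ?_
    filter_upwards [eventually_gt_atTop 0] with t ht
    exact (hW.measure_setOf_lt_eq ht (x t)).symm
  exact nonpos_iff_eq_zero.mp (ge_of_tendsto_of_frequently htail (hE.mono fun t => measure_mono))

end IsStandardBrownianMotion

theorem fpt_ae_finite_of_limsup_upper_loglog_general
    {Ω : Type*} [MeasurableSpace Ω] (P : Measure Ω) [IsProbabilityMeasure P]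
    (W : ℝ → Ω → ℝ) (hW : IsStandardBrownianMotion P W)
    (μ σ V₀ : ℝ) (hσ : 0 < σ)
    (B : ℝ → ℝ) (hBcont : ContinuousOn B (Ici 0)) (hBpos : ∀ t ≥ (0 : ℝ), 0 < B t)
    (hK : B 0 < V₀)
    (hlim : 1 < limsup (fun t : ℝ =>
      ((B t / (B 0 * Real.exp ((μ - σ ^ 2 / 2) * t + σ * Real.sqrt (2 * t * Real.log (Real.log t)))) : ℝ) : EReal)) atTop) :
    P {ω | fpt (gbm V₀ μ σ W) B ω < ⊤} = 1 := by
  have hK0 : 0 < B 0 := hBpos 0 le_rfl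
  have hfreq : ∃ᶠ t in atTop, B 0 * Real.exp ((μ - σ ^ 2 / 2) * t +
      σ * √(2 * t * Real.log (Real.log t))) < B t :=
    (frequently_lt_of_lt_limsup isCobounded_le_of_bot hlim).mono fun t ht =>
      (one_lt_div (by positivity)).1 (EReal.coe_lt_coe_iff.1 ht)
  set A := {ω | ∀ t ≥ 0, B t < gbm V₀ μ σ W t ω}
  have hA : P A = 0 := by
    refine hW.measure_eq_zero_of_frequently_subset
      (tendsto_sqrt_two_mul_log_log_add_div_sqrt ((Real.log (B 0) - Real.log V₀) / σ)) ?_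
    refine (hfreq.and_eventually (eventually_ge_atTop 0)).mono fun t ⟨hBt, ht⟩ ω hω => ?_
    exact add_log_div_lt_of_mul_exp_lt hK0 hσ (hBt.trans (hω t ht))
  have hae : ∀ᵐ ω ∂P, fpt (gbm V₀ μ σ W) B ω < ⊤ := by
    filter_upwards [hW.init, hW.cont, measure_eq_zero_iff_ae_notMem.1 hA] with ω h0 hcont hω
    simp only [A, mem_ofPred_eq, not_forall, not_lt] at hω
    obtain ⟨t, ht, hle⟩ := hω
    refine fpt_lt_top_of_le (continuous_gbm V₀ μ σ hcont).continuousOn hBcont ?_ ht hle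
    simpa [gbm, h0] using hK.le
  exact (measure_congr (ae_eq_univ.2 (ae_iff.1 hae))).trans measure_univ

/-- If `limsup B(t) / (K exp[(μ - σ²/2)t + σ √(2t ln ln t)]) > 1`, then `τ < ∞` a.s. -/
theorem fpt_ae_finite_of_limsup_upper_loglog
    {Ω : Type*} [MeasurableSpace Ω] (P : Measure Ω) [IsProbabilityMeasure P]
    (W : ℝ → Ω → ℝ) (hW : IsStandardBrownianMotion P W)
    (μ σ V₀ : ℝ) (hσ : 0 < σ) (hV₀ : 0 < V₀)
    (B : ℝ → ℝ) (hBcont : ContinuousOn B (Ici 0)) (hBpos : ∀ t ≥ (0 : ℝ), 0 < B t)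
    (hK : B 0 < V₀)
    (hlim : 1 < limsup (fun t : ℝ =>
      ((B t / (B 0 * Real.exp ((μ - σ ^ 2 / 2) * t + σ * Real.sqrt (2 * t * Real.log (Real.log t)))) : ℝ) : EReal)) atTop) :
    P {ω | fpt (gbm V₀ μ σ W) B ω < ⊤} = 1 :=
  fpt_ae_finite_of_limsup_upper_loglog_general P W hW μ σ V₀ hσ B hBcont hBpos hK hlim
end
end

section
/- Let the barrier be B(t) = K·exp[(μ − σ²/2)t + B̃(t)], where B̃ : [0,∞) → [0,∞) is continuous, concave, strictly increasing, with B̃(0) = 0 and B̃(t) → ∞ as t → ∞ (so that B̃ is a bijection of [0,∞) onto itself, with continuous strictly increasing inverse B̃⁻¹). Then the first passage time τ of V_t through B satisfies E[τ] ≥ B̃⁻¹(q) > 0, where q := ln(V₀/K). -/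
open MeasureTheory ProbabilityTheory Filter Set
open scoped ENNReal NNReal

noncomputable section

/-!
Write `q = log (V₀ / K)`. Taking logarithms, `V` meets the barrier exactly when
`σ W_t - B̃(t) = -q`, so it suffices to show `q ≤ B̃ (E τ)` for the first passage time `τ` of
`σ W - B̃` to `-q`: formally this is Wald's identity `E[σ W_τ] = 0` followed by Jensen's
inequality for the concave `B̃`. To get around continuous-time optional stopping we use the
exponential martingale `exp (-λ W_t - λ² t / 2)` on dyadic grids. For `θ < q`, the first grid
point in `[0, T]` where `σ W - B̃ ≤ -θ` is a discrete stopping time, at which optional stopping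
holds by independence of the increments; these times decrease to a limit `ρ ≤ τ`, and Fatou's
lemma keeps `E exp (-λ W_ρ - λ² ρ / 2) ≤ 1`. Jensen's inequality for `exp` turns this into
`E B̃(ρ) ≥ θ - σ λ E ρ / 2 - (σ / λ) e^{λθ/σ} P(ρ = T)`, Markov's inequality bounds
`P(ρ = T) ≤ E τ / T`, and letting `T → ∞`, `λ → 0`, `θ → q` gives the claim.
-/

open Real Topology Finset

section ExponentialMartingale

variable {Ω : Type*} {mΩ : MeasurableSpace Ω} {P : Measure Ω}

lemma lintegral_exp_mul_sub_eq_one_of_map_eq_gaussianReal [IsProbabilityMeasure P]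
    {X : Ω → ℝ} {v : ℝ≥0}
    (hX : P.map X = gaussianReal 0 v) (t : ℝ) :
    ∫⁻ ω, ENNReal.ofReal (exp (t * X ω - v * t ^ 2 / 2)) ∂P = 1 := by
  have hint : Integrable (fun ω ↦ exp (t * X ω)) P :=
    mgf_pos_iff.1 (by rw [mgf_gaussianReal hX]; positivity)
  simp_rw [sub_eq_add_neg, exp_add]
  rw [← ofReal_integral_eq_lintegral_ofReal (hint.mul_const _)
    (ae_of_all _ fun ω ↦ by positivity), integral_mul_const, ← mgf, mgf_gaussianReal hX,
    ← exp_add]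
  simp

lemma sum_range_min_succ {M : Type*} [AddCommMonoid M] (f : ℕ → M) (κ k : ℕ) :
    ∑ i ∈ range (min κ (k + 1)), f i
      = ∑ i ∈ range (min κ k), f i + if k < κ then f k else 0 := by
  split_ifs with hk
  · rw [min_eq_right hk, min_eq_right hk.le, sum_range_succ]
  · rw [not_lt] at hk
    rw [min_eq_left hk, min_eq_left (hk.trans k.le_succ), add_zero]

lemma measurable_sum_range_min {𝓕 : Filtration ℕ mΩ} {ξ : ℕ → Ω → ℝ}
    (hξ : ∀ i, Measurable[𝓕 (i + 1)] (ξ i)) {κ : Ω → ℕ}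
    (hκ : IsStoppingTime 𝓕 fun ω ↦ WithTop.some (κ ω)) (k : ℕ) :
    Measurable[𝓕 k] fun ω ↦ ∑ i ∈ range (min (κ ω) k), ξ i ω := by
  induction k with
  | zero => simp
  | succ k ih =>
    simp_rw [sum_range_min_succ]
    refine (ih.mono (𝓕.mono k.le_succ) le_rfl).add (Measurable.ite ?_ (hξ k) measurable_const)
    simpa only [WithTop.coe_lt_coe] using 𝓕.mono k.le_succ _ (hκ.measurableSet_gt k)

theorem lintegral_exp_sum_range_stoppingTime_eq_one [IsProbabilityMeasure P]
    {𝓕 : Filtration ℕ mΩ} {ξ : ℕ → Ω → ℝ}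
    (hξ : ∀ i, Measurable[𝓕 (i + 1)] (ξ i))
    (hindep : ∀ i, Indep (𝓕 i) (.comap (ξ i) inferInstance) P)
    (hexp : ∀ i, ∫⁻ ω, ENNReal.ofReal (exp (ξ i ω)) ∂P = 1) {κ : Ω → ℕ}
    (hκ : IsStoppingTime 𝓕 fun ω ↦ WithTop.some (κ ω)) {N : ℕ} (hκN : ∀ ω, κ ω ≤ N) :
    ∫⁻ ω, ENNReal.ofReal (exp (∑ i ∈ range (κ ω), ξ i ω)) ∂P = 1 := by
  set E : ℕ → Ω → ℝ≥0∞ := fun k ω ↦ ENNReal.ofReal (exp (∑ i ∈ range (min (κ ω) k), ξ i ω))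
  have hE : ∀ k, Measurable[𝓕 k] (E k) := fun k ↦
    (measurable_sum_range_min hξ hκ k).exp.ennreal_ofReal
  suffices h : ∀ k, ∫⁻ ω, E k ω ∂P = 1 by
    simpa [E, min_eq_left (hκN _)] using h N
  intro k
  induction k with
  | zero => simp [E]
  | succ k ih =>
    set A := {ω | k < κ ω}
    have hA : MeasurableSet[𝓕 k] A := by
      simpa only [WithTop.coe_lt_coe] using hκ.measurableSet_gt k
    have hξk : Measurable[.comap (ξ k) inferInstance] (ξ k) := comap_measurable _
    have hEsucc : ∀ ω, E (k + 1) ω = if k < κ ω then E k ω * ENNReal.ofReal (exp (ξ k ω))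
        else E k ω := by
      intro ω
      simp only [E, sum_range_min_succ]
      split_ifs <;> simp [exp_add, ENNReal.ofReal_mul (exp_nonneg _)]
    rw [← ih, ← lintegral_add_compl _ (𝓕.le k _ hA), ← lintegral_add_compl (E k) (𝓕.le k _ hA)]
    congr 1
    · calc ∫⁻ ω in A, E (k + 1) ω ∂P
          = ∫⁻ ω, A.indicator (E k) ω * ENNReal.ofReal (exp (ξ k ω)) ∂P := by
            rw [← lintegral_indicator (𝓕.le k _ hA)]
            congr 1 with ω
            by_cases hω : k < κ ω
            · simp [A, hω, hEsucc]
            · simp [A, hω]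
        _ = (∫⁻ ω, A.indicator (E k) ω ∂P) * ∫⁻ ω, ENNReal.ofReal (exp (ξ k ω)) ∂P :=
            lintegral_mul_eq_lintegral_mul_lintegral_of_independent_measurableSpace
              (𝓕.le k) ((hξ k).mono (𝓕.le _) le_rfl).comap_le (hindep k) ((hE k).indicator hA)
              hξk.exp.ennreal_ofReal
        _ = ∫⁻ ω in A, E k ω ∂P := by rw [hexp, mul_one, lintegral_indicator (𝓕.le k _ hA)]
    · refine setLIntegral_congr_fun (𝓕.le k _ hA).compl fun ω hω ↦ ?_
      simp [hEsucc, show ¬ k < κ ω from hω]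

end ExponentialMartingale

section ExponentialBound

variable {Ω : Type*} {mΩ : MeasurableSpace Ω} {P : Measure Ω} [IsProbabilityMeasure P]

lemma integral_le_of_integral_exp_le {Y : Ω → ℝ} (hY : Integrable Y P)
    (hexpY : Integrable (fun ω ↦ exp (Y ω)) P) {x : ℝ} (h : ∫ ω, exp (Y ω) ∂P ≤ 1 + x) :
    ∫ ω, Y ω ∂P ≤ x := by
  have hJensen : exp (∫ ω, Y ω ∂P) ≤ ∫ ω, exp (Y ω) ∂P :=
    convexOn_exp.map_integral_le continuous_exp.continuousOn isClosed_univ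
      (ae_of_all _ fun _ ↦ mem_univ _) hY hexpY
  exact exp_le_exp.1 (hJensen.trans (h.trans (by linarith [add_one_le_exp x])))

theorem sub_le_integral_of_lintegral_exp_le_one {σ lam θ : ℝ} (hσ : 0 < σ) (hlam : 0 < lam)
    {S ρ D : Ω → ℝ} (hρ : Integrable ρ P) (hD : Integrable D P) (hρ0 : ∀ ω, 0 ≤ ρ ω)
    (hD0 : ∀ ω, 0 ≤ D ω) {A : Set Ω} (hA : MeasurableSet A)
    (hSA : ∀ᵐ ω ∂P, ω ∈ A → σ * S ω ≤ D ω - θ)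
    (hexp : ∫⁻ ω, ENNReal.ofReal (exp (-lam * S ω - lam ^ 2 * ρ ω / 2)) ∂P ≤ 1) :
    θ - σ * lam * (∫ ω, ρ ω ∂P) / 2 - σ / lam * exp (lam * θ / σ) * P.real Aᶜ
      ≤ ∫ ω, D ω ∂P := by
  -- Jensen for `exp` applied to `Y`, which is at most `-λ S - λ² ρ / 2` on `A` and `λ θ / σ` off it
  set Y : Ω → ℝ := fun ω ↦ -(lam / σ) * (D ω - θ) - lam ^ 2 * ρ ω / 2
  have hY : Integrable Y P :=
    ((hD.sub (integrable_const θ)).const_mul _).sub ((hρ.const_mul _).div_const _)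
  have hYle : ∀ ω, Y ω ≤ lam * θ / σ := fun ω ↦ by
    have : 0 ≤ lam / σ * D ω + lam ^ 2 * ρ ω / 2 := by
      have := hD0 ω; have := hρ0 ω; positivity
    calc Y ω = lam * θ / σ - (lam / σ * D ω + lam ^ 2 * ρ ω / 2) := by simp only [Y]; ring
      _ ≤ lam * θ / σ := by linarith
  have hYA : ∀ᵐ ω ∂P, ω ∈ A → Y ω ≤ -lam * S ω - lam ^ 2 * ρ ω / 2 :=
    hSA.mono fun ω h hω ↦ by
      have : lam * S ω ≤ lam / σ * (D ω - θ) :=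
        calc lam * S ω = lam / σ * (σ * S ω) := by field_simp
          _ ≤ lam / σ * (D ω - θ) := by gcongr; exact h hω
      simp only [Y]; linarith
  have hexpY : Integrable (fun ω ↦ exp (Y ω)) P :=
    .of_bound (continuous_exp.comp_aestronglyMeasurable hY.aestronglyMeasurable)
      (exp (lam * θ / σ)) (ae_of_all _ fun ω ↦ by
        rw [Real.norm_of_nonneg (exp_nonneg _)]; exact exp_le_exp.2 (hYle ω))
  have hlint : ∫⁻ ω, ENNReal.ofReal (exp (Y ω)) ∂P
      ≤ 1 + ENNReal.ofReal (exp (lam * θ / σ)) * P Aᶜ := by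
    rw [← lintegral_add_compl _ hA]
    gcongr
    · refine (setLIntegral_mono_ae' hA ?_).trans (setLIntegral_le_lintegral _ _ |>.trans hexp)
      exact hYA.mono fun ω h hω ↦ ENNReal.ofReal_le_ofReal (exp_le_exp.2 (h hω))
    · refine (setLIntegral_mono' hA.compl fun ω _ ↦ ?_).trans (setLIntegral_const _ _).le
      exact ENNReal.ofReal_le_ofReal (exp_le_exp.2 (hYle ω))
  have hreal : ∫ ω, exp (Y ω) ∂P ≤ 1 + exp (lam * θ / σ) * P.real Aᶜ := by
    rw [integral_eq_lintegral_of_nonneg_ae (ae_of_all _ fun _ ↦ exp_nonneg _)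
      hexpY.aestronglyMeasurable]
    refine (ENNReal.toReal_mono (by finiteness) hlint).trans_eq ?_
    rw [ENNReal.toReal_add (by simp) (by finiteness), ENNReal.toReal_mul,
      ENNReal.toReal_ofReal (exp_nonneg _), measureReal_def, ENNReal.toReal_one]
  have hint : ∫ ω, Y ω ∂P = -(lam / σ) * (∫ ω, D ω ∂P - θ) - lam ^ 2 * (∫ ω, ρ ω ∂P) / 2 := by
    have h1 : Integrable (fun ω ↦ -(lam / σ) * (D ω - θ)) P :=
      (hD.sub (integrable_const θ)).const_mul _
    have h2 : Integrable (fun ω ↦ lam ^ 2 * ρ ω / 2) P := (hρ.const_mul _).div_const _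
    rw [integral_sub h1 h2, integral_const_mul, integral_sub hD (integrable_const θ), integral_div,
      integral_const_mul]
    simp
  have key := integral_le_of_integral_exp_le hY hexpY hreal
  rw [hint] at key
  have := mul_le_mul_of_nonneg_left key (div_pos hσ hlam).le
  rw [show σ / lam * (-(lam / σ) * (∫ ω, D ω ∂P - θ) - lam ^ 2 * (∫ ω, ρ ω ∂P) / 2)
      = -(∫ ω, D ω ∂P - θ) - σ * lam * (∫ ω, ρ ω ∂P) / 2 by field_simp, ← mul_assoc] at this
  linarith

end ExponentialBound

section DyadicHitting

variable {Ω : Type*} (X : ℝ → Ω → ℝ) (a : ℝ) (T : ℕ)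

noncomputable def dyadicHitIndex (n : ℕ) : Ω → ℕ :=
  hittingBtwn (fun j : ℕ ↦ X ((j : ℝ) / 2 ^ n)) (Iic a) 0 (T * 2 ^ n)

noncomputable def dyadicHitTime (n : ℕ) (ω : Ω) : ℝ := dyadicHitIndex X a T n ω / 2 ^ n

noncomputable def dyadicHitLimit (ω : Ω) : ℝ := ⨅ n, dyadicHitTime X a T n ω

variable {X a T}

lemma dyadicHitTime_nonneg (n : ℕ) (ω : Ω) : 0 ≤ dyadicHitTime X a T n ω := by
  unfold dyadicHitTime; positivity

lemma dyadicHitTime_le (n : ℕ) (ω : Ω) : dyadicHitTime X a T n ω ≤ T := by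
  have hle : dyadicHitIndex X a T n ω ≤ T * 2 ^ n := hittingBtwn_le ω
  rw [dyadicHitTime, div_le_iff₀ (by positivity)]
  exact_mod_cast hle

lemma dyadicHitTime_le_of_apply_le {n j : ℕ} {ω : Ω} (h : X ((j : ℝ) / 2 ^ n) ω ≤ a) :
    dyadicHitTime X a T n ω ≤ (j : ℝ) / 2 ^ n := by
  rcases le_or_gt j (T * 2 ^ n) with hj | hj
  · have hle : dyadicHitIndex X a T n ω ≤ j := hittingBtwn_le_of_mem (Nat.zero_le j) hj h
    exact div_le_div_of_nonneg_right (by exact_mod_cast hle) (by positivity)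
  · refine (dyadicHitTime_le n ω).trans ?_
    rw [le_div_iff₀ (by positivity)]
    exact_mod_cast hj.le

lemma apply_dyadicHitTime_le {n : ℕ} {ω : Ω} (h : dyadicHitTime X a T n ω < T) :
    X (dyadicHitTime X a T n ω) ω ≤ a := by
  rw [dyadicHitTime, div_lt_iff₀ (by positivity)] at h
  have hlt : dyadicHitIndex X a T n ω < T * 2 ^ n := by exact_mod_cast h
  exact hittingBtwn_mem_set_of_hittingBtwn_lt hlt

lemma dyadicHitTime_antitone (ω : Ω) : Antitone fun n ↦ dyadicHitTime X a T n ω := by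
  refine antitone_nat_of_succ_le fun n ↦ ?_
  rcases (dyadicHitTime_le (X := X) (a := a) (T := T) n ω).lt_or_eq with h | h
  · have hgrid : dyadicHitTime X a T n ω
        = ((2 * dyadicHitIndex X a T n ω : ℕ) : ℝ) / 2 ^ (n + 1) := by
      rw [dyadicHitTime, pow_succ]
      push_cast
      field_simp
    have := apply_dyadicHitTime_le h
    rw [hgrid] at this ⊢
    exact dyadicHitTime_le_of_apply_le this
  · exact h ▸ dyadicHitTime_le (n + 1) ω

lemma bddBelow_range_dyadicHitTime (ω : Ω) :
    BddBelow (range fun n ↦ dyadicHitTime X a T n ω) :=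
  ⟨0, by rintro _ ⟨n, rfl⟩; exact dyadicHitTime_nonneg n ω⟩

lemma dyadicHitLimit_nonneg (ω : Ω) : 0 ≤ dyadicHitLimit X a T ω :=
  le_ciInf fun n ↦ dyadicHitTime_nonneg n ω

lemma dyadicHitLimit_le (ω : Ω) : dyadicHitLimit X a T ω ≤ T :=
  (ciInf_le (bddBelow_range_dyadicHitTime ω) 0).trans (dyadicHitTime_le 0 ω)

lemma tendsto_dyadicHitTime (ω : Ω) :
    Tendsto (fun n ↦ dyadicHitTime X a T n ω) atTop (𝓝 (dyadicHitLimit X a T ω)) :=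
  tendsto_atTop_ciInf (dyadicHitTime_antitone ω) (bddBelow_range_dyadicHitTime ω)

lemma dyadicHitLimit_le_of_apply_lt {ω : Ω} (hX : Continuous fun t ↦ X t ω) {t : ℝ}
    (ht : 0 ≤ t) (hXt : X t ω < a) : dyadicHitLimit X a T ω ≤ t := by
  set x : ℕ → ℝ := fun n ↦ (⌈t * 2 ^ n⌉₊ : ℝ) / 2 ^ n
  have hx : ∀ n, t ≤ x n ∧ x n ≤ t + 1 / 2 ^ n := by
    intro n
    constructor
    · rw [le_div_iff₀ (by positivity)]; exact Nat.le_ceil _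
    · rw [div_le_iff₀ (by positivity), add_mul, one_div_mul_cancel (by positivity)]
      exact (Nat.ceil_lt_add_one (by positivity)).le
  have hxt : Tendsto x atTop (𝓝 t) := by
    refine tendsto_of_tendsto_of_tendsto_of_le_of_le tendsto_const_nhds ?_ (fun n ↦ (hx n).1)
      fun n ↦ (hx n).2
    simpa using tendsto_const_nhds.add (tendsto_pow_atTop_nhds_zero_of_lt_one
      (by norm_num : (0 : ℝ) ≤ 1 / 2) (by norm_num))
  refine ge_of_tendsto hxt ?_
  filter_upwards [((hX.tendsto t).comp hxt).eventually_lt_const hXt] with n hn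
  exact (ciInf_le (bddBelow_range_dyadicHitTime ω) n).trans (dyadicHitTime_le_of_apply_le hn.le)

lemma ofReal_dyadicHitLimit_le_fpt {ω : Ω} (hX : Continuous fun t ↦ X t ω) {b : ℝ} (hb : b < a) :
    ENNReal.ofReal (dyadicHitLimit X a T ω) ≤ fpt X (fun _ ↦ b) ω := by
  refine le_sInf ?_
  rintro _ ⟨t, ht0, ht, rfl⟩
  exact ENNReal.ofReal_le_ofReal (dyadicHitLimit_le_of_apply_lt hX ht0 (ht ▸ hb))

lemma apply_dyadicHitLimit_le {ω : Ω} (hX : Continuous fun t ↦ X t ω)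
    (h : dyadicHitLimit X a T ω < T) : X (dyadicHitLimit X a T ω) ω ≤ a :=
  le_of_tendsto ((hX.tendsto _).comp (tendsto_dyadicHitTime ω))
    (((tendsto_dyadicHitTime ω).eventually_lt_const h).mono fun _ ↦ apply_dyadicHitTime_le)

variable [MeasurableSpace Ω]

lemma measurable_dyadicHitIndex (hX : ∀ t, Measurable (X t)) (n : ℕ) :
    Measurable (dyadicHitIndex X a T n) := measurable_to_countable' fun j ↦ by
  have h := (Adapted.isStoppingTime_hittingBtwn (f := ⊤) (u := fun j : ℕ ↦ X ((j : ℝ) / 2 ^ n))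
    (fun _ ↦ hX _) (measurableSet_Iic (a := a)) (n := 0) (n' := T * 2 ^ n)).measurableSet_eq j
  simp only [WithTop.coe_eq_coe] at h
  exact h

lemma measurable_dyadicHitLimit (hX : ∀ t, Measurable (X t)) :
    Measurable (dyadicHitLimit X a T) :=
  .iInf fun n ↦ (measurable_from_nat.comp (measurable_dyadicHitIndex hX n)).div_const _

end DyadicHitting

section BarrierGap

variable {Ω : Type*} (σ : ℝ) (B : ℝ → ℝ) (W : ℝ → Ω → ℝ)

def barrierGap (t : ℝ) (ω : Ω) : ℝ := σ * (W t ω - W 0 ω) - B t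

variable {σ B W}

lemma measurable_barrierGap [MeasurableSpace Ω] (hW : ∀ t, Measurable (W t)) (t : ℝ) :
    Measurable (barrierGap σ B W t) :=
  (((hW t).sub (hW 0)).const_mul σ).sub_const _

lemma continuous_barrierGap (hB : Continuous B) {ω : Ω} (hω : Continuous fun t ↦ W t ω) :
    Continuous fun t ↦ barrierGap σ B W t ω := by
  unfold barrierGap; fun_prop

end BarrierGap

namespace IsStandardBrownianMotion

variable {Ω : Type*} {mΩ : MeasurableSpace Ω} {P : Measure Ω} {W : ℝ → Ω → ℝ}

theorem iIndepFun_increments (hW : IsStandardBrownianMotion P W) {t : ℕ → ℝ} (ht : Monotone t)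
    (ht0 : ∀ i, 0 ≤ t i) : iIndepFun (fun i ω ↦ W (t (i + 1)) ω - W (t i) ω) P := by
  refine iIndepFun_iff_finset.2 fun s ↦ ?_
  obtain ⟨n, hn⟩ := s.exists_nat_subset_range
  have h := hW.indep_incr n (fun j ↦ t j) (fun i j hij ↦ ht hij) fun j ↦ ht0 j
  exact h.precomp (g := fun i : s ↦ ⟨i, mem_range.1 (hn i.2)⟩) fun i j hij ↦
    Subtype.ext (congrArg Fin.val hij)

def gridFiltration (hW : IsStandardBrownianMotion P W) (δ : ℝ) : Filtration ℕ mΩ :=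
  Filtration.natural (fun j ω ↦ W (j * δ) ω - W 0 ω) fun _ ↦
    ((hW.meas _).sub (hW.meas 0)).stronglyMeasurable

lemma measurable_gridFiltration (hW : IsStandardBrownianMotion P W) (δ : ℝ) {j k : ℕ}
    (hjk : j ≤ k) : Measurable[hW.gridFiltration δ k] fun ω ↦ W (j * δ) ω - W 0 ω :=
  (comap_measurable _).mono (le_iSup₂ (f := fun j (_ : j ≤ k) ↦
    MeasurableSpace.comap (fun ω ↦ W (j * δ) ω - W 0 ω) inferInstance) j hjk) le_rfl

lemma indep_gridFiltration_increment (hW : IsStandardBrownianMotion P W) {δ : ℝ} (hδ : 0 ≤ δ)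
    (k : ℕ) : Indep (hW.gridFiltration δ k)
      (.comap (fun ω ↦ W ((k + 1 : ℕ) * δ) ω - W (k * δ) ω) inferInstance) P := by
  set incr : ℕ → Ω → ℝ := fun i ω ↦ W ((i + 1 : ℕ) * δ) ω - W (i * δ) ω
  have hincr : ∀ i, Measurable (incr i) := fun i ↦ (hW.meas _).sub (hW.meas _)
  have h := indep_iSup_of_disjoint (fun i ↦ (hincr i).comap_le)
    ((iIndepFun_iff_iIndep _ _ _).1 (hW.iIndepFun_increments
      (t := fun i : ℕ ↦ i * δ) (fun i j hij ↦ by dsimp only; gcongr) fun i ↦ by positivity))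
    (Set.disjoint_singleton_right.2 (lt_irrefl k) : Disjoint (Set.Iio k) {k})
  rw [_root_.iSup_singleton] at h
  refine indep_of_indep_of_le_left h (iSup₂_le fun j hj ↦ Measurable.comap_le ?_)
  have htel : (fun ω ↦ W (j * δ) ω - W 0 ω) = fun ω ↦ ∑ i ∈ range j, incr i ω := by
    ext ω
    rw [sum_range_sub (fun i ↦ W (i * δ) ω)]
    simp
  simp only [htel]
  exact Finset.measurable_sum _ fun i hi ↦ (comap_measurable _).mono
    (le_iSup₂ (f := fun i (_ : i ∈ Set.Iio k) ↦ MeasurableSpace.comap (incr i) inferInstance) i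
      ((mem_range.1 hi).trans_le hj)) le_rfl

lemma map_increment (hW : IsStandardBrownianMotion P W) {δ : ℝ} (hδ : 0 ≤ δ) (i : ℕ) :
    P.map (fun ω ↦ W ((i + 1 : ℕ) * δ) ω - W (i * δ) ω) = gaussianReal 0 δ.toNNReal := by
  rw [hW.gauss_incr _ _ (by positivity) (by push_cast; linarith)]
  congr 2
  push_cast
  ring

lemma isStoppingTime_dyadicHitIndex (hW : IsStandardBrownianMotion P W) (σ : ℝ) (B : ℝ → ℝ)
    (a : ℝ) (T n : ℕ) : IsStoppingTime (hW.gridFiltration (2 ^ n)⁻¹)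
      fun ω ↦ WithTop.some (dyadicHitIndex (barrierGap σ B W) a T n ω) := by
  refine Adapted.isStoppingTime_hittingBtwn (fun j ↦ ?_) measurableSet_Iic
  have h := ((hW.measurable_gridFiltration (2 ^ n)⁻¹ (le_refl j)).const_mul σ).sub_const
    (B (j * (2 ^ n)⁻¹))
  rw [← div_eq_mul_inv] at h
  exact h

variable [IsProbabilityMeasure P]

theorem lintegral_exp_gridStoppingTime_eq_one (hW : IsStandardBrownianMotion P W) {δ : ℝ}
    (hδ : 0 ≤ δ) (lam : ℝ) {κ : Ω → ℕ}
    (hκ : IsStoppingTime (hW.gridFiltration δ) fun ω ↦ WithTop.some (κ ω)) {N : ℕ}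
    (hκN : ∀ ω, κ ω ≤ N) :
    ∫⁻ ω, ENNReal.ofReal (exp (-lam * (W (κ ω * δ) ω - W 0 ω) - lam ^ 2 * (κ ω * δ) / 2)) ∂P
      = 1 := by
  set incr : ℕ → Ω → ℝ := fun i ω ↦ W ((i + 1 : ℕ) * δ) ω - W (i * δ) ω
  set ξ : ℕ → Ω → ℝ := fun i ω ↦ -lam * incr i ω - lam ^ 2 * δ / 2
  have hsum : ∀ ω, ∑ i ∈ Finset.range (κ ω), ξ i ω
      = -lam * (W (κ ω * δ) ω - W 0 ω) - lam ^ 2 * (κ ω * δ) / 2 := by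
    intro ω
    rw [Finset.sum_sub_distrib, ← Finset.mul_sum, Finset.sum_range_sub (fun i ↦ W (i * δ) ω)]
    simp only [CharP.cast_eq_zero, zero_mul, Finset.sum_const, Finset.card_range, nsmul_eq_mul]
    ring
  have hincr : ∀ i, Measurable[hW.gridFiltration δ (i + 1)] (incr i) := by
    intro i
    have h := (hW.measurable_gridFiltration δ le_rfl).sub
      (hW.measurable_gridFiltration δ i.le_succ)
    convert h using 1
    ext ω
    simp [incr]
  have hξ : ∀ i, Measurable[.comap (incr i) inferInstance] (ξ i) := fun i ↦
    ((comap_measurable _).const_mul _).sub_const _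
  simp_rw [← hsum]
  refine lintegral_exp_sum_range_stoppingTime_eq_one (fun i ↦ ((hincr i).const_mul _).sub_const _)
    (fun i ↦ indep_of_indep_of_le_right (hW.indep_gridFiltration_increment hδ i) (hξ i).comap_le)
    (fun i ↦ ?_) hκ hκN
  convert lintegral_exp_mul_sub_eq_one_of_map_eq_gaussianReal (hW.map_increment hδ i) (-lam)
    using 4
  simp [incr, Real.coe_toNNReal _ hδ]
  ring

/-- Fatou's lemma carries the optional stopping identity on the dyadic grids over to the limit
of the dyadic hitting times. -/
theorem lintegral_exp_dyadicHitLimit_le_one (hW : IsStandardBrownianMotion P W) (σ : ℝ)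
    (B : ℝ → ℝ) (a : ℝ) (T : ℕ) (lam : ℝ) :
    ∫⁻ ω, ENNReal.ofReal (exp (-lam * (W (dyadicHitLimit (barrierGap σ B W) a T ω) ω - W 0 ω)
      - lam ^ 2 * dyadicHitLimit (barrierGap σ B W) a T ω / 2)) ∂P ≤ 1 := by
  set X := barrierGap σ B W
  set F : ℝ → Ω → ℝ≥0∞ := fun t ω ↦ ENNReal.ofReal (exp (-lam * (W t ω - W 0 ω) - lam ^ 2 * t / 2))
  have hF : ∀ t, Measurable (F t) := fun t ↦
    (((hW.meas t).sub (hW.meas 0)).const_mul _).sub_const _ |>.exp.ennreal_ofReal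
  have hZ : ∀ n, ∫⁻ ω, F (dyadicHitTime X a T n ω) ω ∂P = 1 := fun n ↦ by
    have h := hW.lintegral_exp_gridStoppingTime_eq_one (by positivity) lam
      (hW.isStoppingTime_dyadicHitIndex σ B a T n) fun ω ↦ hittingBtwn_le ω
    simp only [← div_eq_mul_inv] at h
    exact h
  have hFc : ∀ᵐ ω ∂P, Continuous fun t ↦ F t ω := hW.cont.mono fun ω hω ↦
    ENNReal.continuous_ofReal.comp (by fun_prop)
  show ∫⁻ ω, F (dyadicHitLimit X a T ω) ω ∂P ≤ 1
  clear_value F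
  have hZm : ∀ n, Measurable fun ω ↦ F (dyadicHitTime X a T n ω) ω := by
    intro n
    have hκ : Measurable (dyadicHitIndex X a T n) :=
      measurable_dyadicHitIndex (measurable_barrierGap hW.meas) n
    exact (measurable_from_prod_countable_left (f := fun p : Ω × ℕ ↦ F ((p.2 : ℝ) / 2 ^ n) p.1)
      fun j ↦ hF ((j : ℝ) / 2 ^ n)).comp (measurable_id.prodMk hκ)
  have hlim : ∀ᵐ ω ∂P, Tendsto (fun n ↦ F (dyadicHitTime X a T n ω) ω) atTop
      (𝓝 (F (dyadicHitLimit X a T ω) ω)) :=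
    hFc.mono fun ω hω ↦ (hω.tendsto _).comp (tendsto_dyadicHitTime ω)
  calc ∫⁻ ω, F (dyadicHitLimit X a T ω) ω ∂P
      = ∫⁻ ω, liminf (fun n ↦ F (dyadicHitTime X a T n ω) ω) atTop ∂P :=
        lintegral_congr_ae (hlim.mono fun ω h ↦ h.liminf_eq.symm)
    _ ≤ liminf (fun n ↦ ∫⁻ ω, F (dyadicHitTime X a T n ω) ω ∂P) atTop := lintegral_liminf_le hZm
    _ = 1 := by simp [hZ]

variable {σ : ℝ} {B : ℝ → ℝ}

theorem sub_le_of_lintegral_fpt_barrierGap_le (hW : IsStandardBrownianMotion P W) (hσ : 0 < σ)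
    (hB : Continuous B) (hB0 : ∀ t, 0 ≤ B t) (hBmono : MonotoneOn B (Ici 0))
    (hBconc : ConcaveOn ℝ (Ici 0) B) {q m : ℝ} (hm0 : 0 ≤ m)
    (hm : ∫⁻ ω, fpt (barrierGap σ B W) (fun _ ↦ -q) ω ∂P ≤ ENNReal.ofReal m) {θ : ℝ}
    (hθ : θ < q) {lam : ℝ} (hlam : 0 < lam) {T : ℕ} (hT : 0 < T) :
    θ - σ * lam * m / 2 - σ / lam * exp (lam * θ / σ) * (m / T) ≤ B m := by
  set ρ := dyadicHitLimit (barrierGap σ B W) (-θ) T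
  have hρm : Measurable ρ := measurable_dyadicHitLimit (measurable_barrierGap hW.meas)
  have hρ : Integrable ρ P := .of_bound hρm.aestronglyMeasurable T (ae_of_all _ fun ω ↦ by
    rw [Real.norm_of_nonneg (dyadicHitLimit_nonneg ω)]; exact dyadicHitLimit_le ω)
  have hBρ : Integrable (fun ω ↦ B (ρ ω)) P :=
    .of_bound (hB.measurable.comp hρm).aestronglyMeasurable (B T) (ae_of_all _ fun ω ↦ by
      rw [Real.norm_of_nonneg (hB0 _)]
      exact hBmono (dyadicHitLimit_nonneg ω) (mem_Ici.2 T.cast_nonneg) (dyadicHitLimit_le ω))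
  have hρ_le : ∫ ω, ρ ω ∂P ≤ m := by
    rw [integral_eq_lintegral_of_nonneg_ae (ae_of_all _ dyadicHitLimit_nonneg)
      hρm.aestronglyMeasurable, ← ENNReal.toReal_ofReal hm0]
    refine ENNReal.toReal_mono ENNReal.ofReal_ne_top ((lintegral_mono_ae ?_).trans hm)
    filter_upwards [hW.cont] with ω hω
    exact ofReal_dyadicHitLimit_le_fpt (continuous_barrierGap hB hω) (neg_lt_neg hθ)
  have hMarkov : P.real {ω | ρ ω < T}ᶜ ≤ m / T := by
    have hcompl : {ω | ρ ω < T}ᶜ = {ω | (T : ℝ) ≤ ρ ω} := by ext; simp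
    rw [le_div_iff₀ (by positivity), mul_comm, hcompl]
    exact (mul_meas_ge_le_integral_of_nonneg (ae_of_all _ dyadicHitLimit_nonneg) hρ T).trans hρ_le
  have hhit : ∀ᵐ ω ∂P, ω ∈ {ω | ρ ω < T} → σ * (W (ρ ω) ω - W 0 ω) ≤ B (ρ ω) - θ := by
    filter_upwards [hW.cont] with ω hω hlt
    have : barrierGap σ B W (ρ ω) ω ≤ -θ :=
      apply_dyadicHitLimit_le (continuous_barrierGap hB hω) hlt
    rw [barrierGap] at this
    linarith
  calc θ - σ * lam * m / 2 - σ / lam * exp (lam * θ / σ) * (m / T)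
      ≤ θ - σ * lam * (∫ ω, ρ ω ∂P) / 2 - σ / lam * exp (lam * θ / σ) * P.real {ω | ρ ω < T}ᶜ := by
        gcongr
    _ ≤ ∫ ω, B (ρ ω) ∂P := sub_le_integral_of_lintegral_exp_le_one hσ hlam hρ hBρ
        dyadicHitLimit_nonneg (fun ω ↦ hB0 _) (measurableSet_lt hρm measurable_const) hhit
        (hW.lintegral_exp_dyadicHitLimit_le_one σ B (-θ) T lam)
    _ ≤ B (∫ ω, ρ ω ∂P) := hBconc.le_map_integral hB.continuousOn isClosed_Ici
        (ae_of_all _ dyadicHitLimit_nonneg) hρ hBρ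
    _ ≤ B m := hBmono (mem_Ici.2 (integral_nonneg dyadicHitLimit_nonneg)) hm0 hρ_le

theorem le_of_lintegral_fpt_barrierGap_le (hW : IsStandardBrownianMotion P W) (hσ : 0 < σ)
    (hB : Continuous B) (hB0 : ∀ t, 0 ≤ B t) (hBmono : MonotoneOn B (Ici 0))
    (hBconc : ConcaveOn ℝ (Ici 0) B) {q m : ℝ} (hm0 : 0 ≤ m)
    (hm : ∫⁻ ω, fpt (barrierGap σ B W) (fun _ ↦ -q) ω ∂P ≤ ENNReal.ofReal m) : q ≤ B m := by
  refine le_of_forall_lt_imp_le_of_dense fun θ hθ ↦ ?_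
  have hlam : ∀ lam > 0, θ - σ * lam * m / 2 ≤ B m := fun lam hlam ↦ by
    refine le_of_tendsto ?_ (eventually_atTop.2 ⟨1, fun T hT ↦
      hW.sub_le_of_lintegral_fpt_barrierGap_le hσ hB hB0 hBmono hBconc hm0 hm hθ hlam hT⟩)
    simpa using tendsto_const_nhds.sub
      ((tendsto_const_div_atTop_nhds_zero_nat m).const_mul (σ / lam * exp (lam * θ / σ)))
  have hlim : Tendsto (fun lam ↦ θ - σ * lam * m / 2) (𝓝[>] 0) (𝓝 θ) := by
    have : Continuous fun lam : ℝ ↦ θ - σ * lam * m / 2 := by fun_prop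
    simpa using (this.tendsto 0).mono_left nhdsWithin_le_nhds
  exact le_of_tendsto hlim (eventually_nhdsWithin_of_forall hlam)

end IsStandardBrownianMotion

lemma fpt_gbm_eq_fpt_barrierGap {Ω : Type*} {W : ℝ → Ω → ℝ} {V₀ K μ σ : ℝ} (hV₀ : 0 < V₀)
    (hK : 0 < K) {Bt B : ℝ → ℝ} (hB : EqOn Bt B (Ici 0)) {ω : Ω} (hW0 : W 0 ω = 0) :
    fpt (gbm V₀ μ σ W) (fun t ↦ K * exp ((μ - σ ^ 2 / 2) * t + Bt t)) ω
      = fpt (barrierGap σ B W) (fun _ ↦ -log (V₀ / K)) ω := by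
  have hiff : ∀ t ∈ Ici (0 : ℝ), gbm V₀ μ σ W t ω = K * exp ((μ - σ ^ 2 / 2) * t + Bt t)
      ↔ barrierGap σ B W t ω = -log (V₀ / K) := fun t ht ↦ by
    rw [gbm, barrierGap, hW0, sub_zero, ← hB ht, log_div hV₀.ne' hK.ne', ← exp_log hV₀,
      ← exp_log hK, ← exp_add, ← exp_add, exp_eq_exp, log_exp, log_exp]
    constructor <;> intro h <;> linarith
  unfold fpt
  congr 1
  ext x
  constructor <;> rintro ⟨t, ht, h, rfl⟩
  · exact ⟨t, ht, (hiff t ht).1 h, rfl⟩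
  · exact ⟨t, ht, (hiff t ht).2 h, rfl⟩

theorem fpt_mean_ge_inverse_of_concave_exponent_general
    {Ω : Type*} [MeasurableSpace Ω] (P : Measure Ω) [IsProbabilityMeasure P]
    (W : ℝ → Ω → ℝ) (hW : IsStandardBrownianMotion P W)
    (μ σ V₀ : ℝ) (hσ : 0 < σ) (hV₀ : 0 < V₀)
    (K : ℝ) (hK0 : 0 < K) (hKV : K < V₀)
    (Bt : ℝ → ℝ) (hBtcont : ContinuousOn Bt (Ici 0)) (hBtconc : ConcaveOn ℝ (Ici 0) Bt)
    (hBtnonneg : ∀ t ≥ (0 : ℝ), 0 ≤ Bt t)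
    (hBtmono : StrictMonoOn Bt (Ici 0)) (hBt0 : Bt 0 = 0)
    (Binv : ℝ → ℝ)
    (hBinvMono : StrictMonoOn Binv (Ici 0))
    (hBinv_left : ∀ t ≥ (0 : ℝ), Binv (Bt t) = t) :
    ENNReal.ofReal (Binv (Real.log (V₀ / K)))
      ≤ (∫⁻ ω, fpt (gbm V₀ μ σ W)
          (fun t => K * Real.exp ((μ - σ ^ 2 / 2) * t + Bt t)) ω ∂P) ∧
    0 < Binv (Real.log (V₀ / K)) := by
  set q := log (V₀ / K)
  have hq : 0 < q := log_pos ((one_lt_div hK0).2 hKV)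
  have hBinv0 : Binv 0 = 0 := by simpa [hBt0] using hBinv_left 0 le_rfl
  refine ⟨?_, hBinv0 ▸ hBinvMono self_mem_Ici hq.le hq⟩
  set B : ℝ → ℝ := fun t ↦ Bt (max t 0)
  have hBeq : EqOn Bt B (Ici 0) := fun t ht ↦ by simp [B, max_eq_left (mem_Ici.1 ht)]
  rw [lintegral_congr_ae (hW.init.mono fun ω ↦ fpt_gbm_eq_fpt_barrierGap hV₀ hK0 hBeq)]
  set m := ∫⁻ ω, fpt (barrierGap σ B W) (fun _ ↦ -q) ω ∂P
  rcases eq_or_ne m ∞ with hm | hm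
  · simp [hm]
  have hqm : q ≤ B m.toReal := hW.le_of_lintegral_fpt_barrierGap_le hσ
    (hBtcont.comp_continuous (continuous_id.max continuous_const) fun t ↦ le_max_right t 0)
    (fun t ↦ hBtnonneg _ (le_max_right t 0)) (hBtmono.monotoneOn.congr hBeq)
    (hBtconc.congr hBeq) ENNReal.toReal_nonneg (ENNReal.ofReal_toReal hm).ge
  rw [← hBeq (mem_Ici.2 ENNReal.toReal_nonneg)] at hqm
  rw [← ENNReal.ofReal_toReal hm]
  refine ENNReal.ofReal_le_ofReal ?_
  calc Binv q ≤ Binv (Bt m.toReal) := hBinvMono.monotoneOn hq.le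
        (hBtnonneg _ ENNReal.toReal_nonneg) hqm
    _ = m.toReal := hBinv_left _ ENNReal.toReal_nonneg

/-- For a barrier `B(t) = K exp[(μ - σ²/2)t + B̃(t)]` with `B̃ : [0,∞) → [0,∞)`
continuous, concave, strictly increasing, `B̃(0) = 0` and `B̃(t) → ∞`, the mean first
passage time satisfies `E[τ] ≥ B̃⁻¹(q) > 0` where `q = ln(V₀/K)`. -/
theorem fpt_mean_ge_inverse_of_concave_exponent
    {Ω : Type*} [MeasurableSpace Ω] (P : Measure Ω) [IsProbabilityMeasure P]
    (W : ℝ → Ω → ℝ) (hW : IsStandardBrownianMotion P W)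
    (μ σ V₀ : ℝ) (hσ : 0 < σ) (hV₀ : 0 < V₀)
    (K : ℝ) (hK0 : 0 < K) (hKV : K < V₀)
    (Bt : ℝ → ℝ) (hBtcont : ContinuousOn Bt (Ici 0)) (hBtconc : ConcaveOn ℝ (Ici 0) Bt)
    (hBtnonneg : ∀ t ≥ (0 : ℝ), 0 ≤ Bt t)
    (hBtmono : StrictMonoOn Bt (Ici 0)) (hBt0 : Bt 0 = 0)
    (hBttop : Tendsto Bt atTop atTop)
    (Binv : ℝ → ℝ) (hBinvCont : ContinuousOn Binv (Ici 0))
    (hBinvMono : StrictMonoOn Binv (Ici 0))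
    (hBinv_left : ∀ t ≥ (0 : ℝ), Binv (Bt t) = t)
    (hBinv_right : ∀ s ≥ (0 : ℝ), 0 ≤ Binv s ∧ Bt (Binv s) = s) :
    ENNReal.ofReal (Binv (Real.log (V₀ / K)))
      ≤ (∫⁻ ω, fpt (gbm V₀ μ σ W)
          (fun t => K * Real.exp ((μ - σ ^ 2 / 2) * t + Bt t)) ω ∂P) ∧
    0 < Binv (Real.log (V₀ / K)) :=
  fpt_mean_ge_inverse_of_concave_exponent_general P W hW μ σ V₀ hσ hV₀ K hK0 hKV Bt hBtcont hBtconc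
    hBtnonneg hBtmono hBt0 Binv hBinvMono hBinv_left
end
end
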